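/- arXiv:2511.08470 — 8 statements merged into one kernel-verified Lean document; each statement's English description precedes it below -/
import Mathlib

section
/- Let ι be a finite index type with at least two elements and Y : ι → Multiset ℝ a family of nonempty finite multisets of reals. Then the MAE-split optimum satisfies λ* = min over a, b ∈ ℝ of Σ_{i ∈ ι} min( Σ_{x ∈ Y i} |x − a| , Σ_{x ∈ Y i} |x − b| ), i.e. this two-variable infimum is attained and equals λ*. -/
/-!
Every pair `(a, b)` induces the split `S = {i | Σ_{Y i} |x - a| ≤ Σ_{Y i} |x - b|}`, and since
`MAE` is a minimum, `λ(S)` is at most the two-point objective at `(a, b)`; when that split is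
trivial the objective is a one-point sum, which dominates `λ` of any split. Conversely, medians
`a` and `b` of the two halves of an optimal split give an objective of at most `λ*`.
-/

/-- The mean absolute error of a finite multiset of reals:
`MAE m = min_{a ∈ ℝ} Σ_{x ∈ m} |x − a|` (as an infimum; it is attained for `m ≠ 0`). -/
noncomputable def MAE (m : Multiset ℝ) : ℝ :=
  sInf (Set.range fun a : ℝ => (m.map fun x => |x - a|).sum)

/-- The cost `λ(S) = MAE(Σ_{i ∈ S} Y i) + MAE(Σ_{i ∉ S} Y i)` of a split `S`. -/
noncomputable def splitCost {ι : Type*} [Fintype ι] [DecidableEq ι]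
    (Y : ι → Multiset ℝ) (S : Finset ι) : ℝ :=
  MAE (∑ i ∈ S, Y i) + MAE (∑ i ∈ Sᶜ, Y i)

/-- The MAE-split optimum `λ*`: the minimum of `λ(S)` over all subsets `S` with both
`S` and its complement nonempty. -/
noncomputable def lamStar {ι : Type*} [Fintype ι] [DecidableEq ι]
    (Y : ι → Multiset ℝ) : ℝ :=
  sInf {v : ℝ | ∃ S : Finset ι, S.Nonempty ∧ Sᶜ.Nonempty ∧ v = splitCost Y S}

open Filter

theorem Finset.sum_min_le_sum_add_sum_compl {ι M : Type*} [Fintype ι] [DecidableEq ι]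
    [AddCommMonoid M] [LinearOrder M] [IsOrderedAddMonoid M] (f g : ι → M) (S : Finset ι) :
    ∑ i, min (f i) (g i) ≤ ∑ i ∈ S, f i + ∑ i ∈ Sᶜ, g i := by
  rw [← S.sum_add_sum_compl]
  exact add_le_add (sum_le_sum fun i _ => min_le_left _ _)
    (sum_le_sum fun i _ => min_le_right _ _)

theorem Finset.sum_min_eq_sum_filter_add_sum_compl {ι M : Type*} [Fintype ι] [DecidableEq ι]
    [AddCommMonoid M] [LinearOrder M] (f g : ι → M) :
    ∑ i, min (f i) (g i) = ∑ i with f i ≤ g i, f i + ∑ i ∈ ({i | f i ≤ g i} : Finset ι)ᶜ, g i := by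
  simp only [min_def, sum_ite, compl_filter]

noncomputable def absDev (m : Multiset ℝ) (a : ℝ) : ℝ :=
  (m.map fun x => |x - a|).sum

theorem absDev_nonneg (m : Multiset ℝ) (a : ℝ) : 0 ≤ absDev m a :=
  Multiset.sum_nonneg (Multiset.forall_mem_map_iff.2 fun _ _ => abs_nonneg _)

theorem continuous_absDev (m : Multiset ℝ) : Continuous (absDev m) :=
  continuous_multiset_sum m fun _ _ => (continuous_const.sub continuous_id).abs

theorem abs_sub_le_absDev {m : Multiset ℝ} {x : ℝ} (hx : x ∈ m) (a : ℝ) :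
    |x - a| ≤ absDev m a :=
  Multiset.single_le_sum (Multiset.forall_mem_map_iff.2 fun _ _ => abs_nonneg _) _
    (Multiset.mem_map_of_mem _ hx)

theorem absDev_finset_sum {ι : Type*} (Y : ι → Multiset ℝ) (S : Finset ι) (a : ℝ) :
    absDev (∑ i ∈ S, Y i) a = ∑ i ∈ S, absDev (Y i) a :=
  map_sum (Multiset.sumAddMonoidHom.comp (Multiset.mapAddMonoidHom fun x => |x - a|)) Y S

theorem MAE_le_absDev (m : Multiset ℝ) (a : ℝ) : MAE m ≤ absDev m a :=
  csInf_le ⟨0, Set.forall_mem_range.2 (absDev_nonneg m)⟩ ⟨a, rfl⟩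

theorem tendsto_absDev_cocompact {m : Multiset ℝ} (hm : m ≠ 0) :
    Tendsto (absDev m) (cocompact ℝ) atTop := by
  obtain ⟨x, hx⟩ := Multiset.exists_mem_of_ne_zero hm
  refine tendsto_atTop_mono (fun a => ?_)
    (tendsto_atTop_add_const_right _ (-|x|) tendsto_norm_cocompact_atTop)
  have := abs_sub_le_absDev hx a
  have := abs_sub_abs_le_abs_sub a x
  rw [Real.norm_eq_abs, abs_sub_comm a x] at *
  linarith

theorem exists_absDev_eq_MAE {m : Multiset ℝ} (hm : m ≠ 0) : ∃ a, absDev m a = MAE m := by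
  obtain ⟨a, ha⟩ := (continuous_absDev m).exists_forall_le (tendsto_absDev_cocompact hm)
  exact ⟨a, le_antisymm (le_csInf (Set.range_nonempty _) (Set.forall_mem_range.2 ha))
    (MAE_le_absDev m a)⟩

section Split

variable {ι : Type*} [Fintype ι] [DecidableEq ι] (Y : ι → Multiset ℝ)

theorem splitCost_le (S : Finset ι) (a b : ℝ) :
    splitCost Y S ≤ ∑ i ∈ S, absDev (Y i) a + ∑ i ∈ Sᶜ, absDev (Y i) b := by
  rw [splitCost, ← absDev_finset_sum, ← absDev_finset_sum]
  exact add_le_add (MAE_le_absDev _ a) (MAE_le_absDev _ b)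

theorem finite_splitCosts :
    {v : ℝ | ∃ S : Finset ι, S.Nonempty ∧ Sᶜ.Nonempty ∧ v = splitCost Y S}.Finite :=
  (Set.finite_range (splitCost Y)).subset fun _ ⟨S, _, _, hv⟩ => ⟨S, hv.symm⟩

theorem lamStar_le_splitCost {S : Finset ι} (hS : S.Nonempty) (hSc : Sᶜ.Nonempty) :
    lamStar Y ≤ splitCost Y S :=
  csInf_le (finite_splitCosts Y).bddBelow ⟨S, hS, hSc, rfl⟩

theorem exists_splitCost_eq_lamStar (h2 : 2 ≤ Fintype.card ι) :
    ∃ S : Finset ι, S.Nonempty ∧ Sᶜ.Nonempty ∧ lamStar Y = splitCost Y S := by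
  obtain ⟨i, j, hij⟩ := Fintype.exists_pair_of_one_lt_card h2
  have hne : {v : ℝ | ∃ S : Finset ι, S.Nonempty ∧ Sᶜ.Nonempty ∧ v = splitCost Y S}.Nonempty :=
    ⟨_, {i}, Finset.singleton_nonempty i, ⟨j, by simpa using hij.symm⟩, rfl⟩
  exact hne.csInf_mem (finite_splitCosts Y)

theorem lamStar_le_sum_absDev (h2 : 2 ≤ Fintype.card ι) (c : ℝ) :
    lamStar Y ≤ ∑ i, absDev (Y i) c := by
  obtain ⟨S, -, -, hS⟩ := exists_splitCost_eq_lamStar Y h2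
  rw [hS, ← S.sum_add_sum_compl]
  exact splitCost_le Y S c c

theorem lamStar_le_sum_min_absDev (h2 : 2 ≤ Fintype.card ι) (a b : ℝ) :
    lamStar Y ≤ ∑ i, min (absDev (Y i) a) (absDev (Y i) b) := by
  rw [Finset.sum_min_eq_sum_filter_add_sum_compl]
  set T : Finset ι := {i | absDev (Y i) a ≤ absDev (Y i) b}
  rcases T.eq_empty_or_nonempty with hT | hT
  · rw [hT, Finset.sum_empty, zero_add, Finset.compl_empty]
    exact lamStar_le_sum_absDev Y h2 b
  rcases Tᶜ.eq_empty_or_nonempty with hTc | hTc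
  · rw [hTc, Finset.sum_empty, add_zero, (Finset.compl_eq_empty_iff T).mp hTc]
    exact lamStar_le_sum_absDev Y h2 a
  exact (lamStar_le_splitCost Y hT hTc).trans (splitCost_le Y T a b)

end Split

/-- If `ι` is a finite index type with at least two elements and each `Y i` is a nonempty
multiset of reals, then
`λ* = min_{a,b ∈ ℝ} Σ_i min(Σ_{x ∈ Y i} |x − a|, Σ_{x ∈ Y i} |x − b|)`,
with the two-variable infimum being attained. -/
theorem mae_split_eq_two_median {ι : Type*} [Fintype ι] [DecidableEq ι]
    (h2 : 2 ≤ Fintype.card ι) (Y : ι → Multiset ℝ) (hY : ∀ i, Y i ≠ 0) :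
    ∃ a b : ℝ,
      (∀ a' b' : ℝ,
        (∑ i, min ((Y i).map fun x => |x - a|).sum ((Y i).map fun x => |x - b|).sum)
          ≤ ∑ i, min ((Y i).map fun x => |x - a'|).sum ((Y i).map fun x => |x - b'|).sum) ∧
      (∑ i, min ((Y i).map fun x => |x - a|).sum ((Y i).map fun x => |x - b|).sum)
        = lamStar Y := by
  have sum_ne_zero {S : Finset ι} (hS : S.Nonempty) : ∑ i ∈ S, Y i ≠ 0 := by
    obtain ⟨i, hi⟩ := hS
    exact fun h => hY i (Finset.sum_eq_zero_iff.mp h i hi)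
  obtain ⟨S, hS, hSc, hopt⟩ := exists_splitCost_eq_lamStar Y h2
  obtain ⟨a, ha⟩ := exists_absDev_eq_MAE (sum_ne_zero hS)
  obtain ⟨b, hb⟩ := exists_absDev_eq_MAE (sum_ne_zero hSc)
  have hle : ∑ i, min (absDev (Y i) a) (absDev (Y i) b) ≤ lamStar Y := by
    rw [hopt, splitCost, ← ha, ← hb, absDev_finset_sum, absDev_finset_sum]
    exact Finset.sum_min_le_sum_add_sum_compl _ _ S
  have heq := le_antisymm hle (lamStar_le_sum_min_absDev Y h2 a b)
  exact ⟨a, b, fun a' b' => heq.le.trans (lamStar_le_sum_min_absDev Y h2 a' b'), heq⟩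
end

section
/- Let f : ℝ → ℝ be unimodal. Define g : ℝ × ℝ → EReal by g(x,y) = min(f(x), f(y)) if x ≤ y and g(x,y) = +∞ if x > y. Then g is totally monotone: for all x1 ≤ x2 and y1 ≤ y2, if g(x1,y1) ≥ g(x1,y2) then g(x2,y1) ≥ g(x2,y2). -/
/-- A function `f : ℝ → ℝ` is unimodal if there is a mode `c` such that `f` is
non-increasing before `c` and non-decreasing after `c`. -/
def Unimodal (f : ℝ → ℝ) : Prop :=
  ∃ c : ℝ, (∀ x y : ℝ, x ≤ y → y ≤ c → f y ≤ f x) ∧ (∀ x y : ℝ, c ≤ x → x ≤ y → f x ≤ f y)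

/-- `g(x,y) = min(f(x), f(y))` if `x ≤ y`, and `g(x,y) = +∞` otherwise, as an `EReal`. -/
noncomputable def gEReal (f : ℝ → ℝ) (x y : ℝ) : EReal :=
  if x ≤ y then ((min (f x) (f y) : ℝ) : EReal) else ⊤

/-- If `f : ℝ → ℝ` is unimodal, then `g(x,y) = min(f(x),f(y))` for `x ≤ y` (and `+∞` for
`x > y`) is totally monotone: for all `x1 ≤ x2` and `y1 ≤ y2`, if `g(x1,y1) ≥ g(x1,y2)`
then `g(x2,y1) ≥ g(x2,y2)`. -/
theorem unimodal_min_totallyMonotone (f : ℝ → ℝ) (hf : Unimodal f) :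
    ∀ x1 x2 y1 y2 : ℝ, x1 ≤ x2 → y1 ≤ y2 →
      gEReal f x1 y2 ≤ gEReal f x1 y1 → gEReal f x2 y2 ≤ gEReal f x2 y1 := by
  obtain ⟨c, hdec, hinc⟩ := hf
  intro x1 x2 y1 y2 hx hy h
  unfold gEReal at h ⊢
  by_cases h21 : x2 ≤ y1
  · have h11 : x1 ≤ y1 := le_trans hx h21
    have h12 : x1 ≤ y2 := le_trans h11 hy
    have h22 : x2 ≤ y2 := le_trans h21 hy
    rw [if_pos h12, if_pos h11, EReal.coe_le_coe_iff] at h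
    rw [if_pos h22, if_pos h21, EReal.coe_le_coe_iff]
    -- suffices to show min (f x2) (f y2) ≤ f y1
    have key : min (f x2) (f y2) ≤ f y1 := by
      by_cases hyy : f y2 ≤ f y1
      · exact le_trans (min_le_right _ _) hyy
      · push_neg at hyy
        have hx1 : f x1 ≤ f y1 := by
          have := le_trans h (min_le_right _ _)
          rcases min_le_iff.mp this with h' | h'
          · exact h'
          · exact absurd h' (not_le.mpr hyy)
        by_cases hc : x2 ≤ c
        · exact le_trans (min_le_left _ _) (le_trans (hdec x1 x2 hx hc) hx1)
        · push_neg at hc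
          exact le_trans (min_le_left _ _) (hinc x2 y1 hc.le h21)
    exact le_min (min_le_left _ _) key
  · rw [if_neg h21]
    exact le_top
end

section
/- Let f_1, …, f_k : ℝ → ℝ be unimodal functions and define G(x,y) = Σ_{i=1}^k min(f_i(x), f_i(y)). Then G is totally monotone on ordered pairs: for all real numbers x1 ≤ x2 ≤ y1 ≤ y2, if G(x1,y1) ≥ G(x1,y2) then G(x2,y1) ≥ G(x2,y2). -/
lemma unimodal_min_quad (f : ℝ → ℝ) (hf : Unimodal f) {x1 x2 y1 y2 : ℝ}
    (h12 : x1 ≤ x2) (h21 : x2 ≤ y1) (hy : y1 ≤ y2) :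
    min (f x1) (f y1) + min (f x2) (f y2) ≤ min (f x2) (f y1) + min (f x1) (f y2) := by
  obtain ⟨c, hd, hi⟩ := hf
  rcases le_total c y1 with hc | hc
  · have hb : f y1 ≤ f y2 := hi _ _ hc hy
    rcases le_total c x2 with hcx | hcx
    · have h1 : f x2 ≤ f y1 := hi _ _ hcx h21
      rw [min_eq_left h1, min_eq_left (h1.trans hb)]
      have := min_le_min (le_refl (f x1)) hb
      linarith
    · have ha : f x2 ≤ f x1 := hd _ _ h12 hcx
      rcases le_total (f x2) (f y1) with h | h
      · rw [min_eq_left h, min_eq_left (h.trans hb)]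
        have := min_le_min (le_refl (f x1)) hb
        linarith
      · rw [min_eq_right h, min_eq_right (h.trans ha)]
        have := min_le_min ha (le_refl (f y2))
        linarith
  · have ha2 : f y1 ≤ f x2 := hd _ _ h21 hc
    have ha1 : f y1 ≤ f x1 := hd _ _ (h12.trans h21) hc
    rw [min_eq_right ha1, min_eq_right ha2]
    have := min_le_min (hd _ _ h12 (h21.trans hc)) (le_refl (f y2))
    linarith

/-- For unimodal `f_1, …, f_k : ℝ → ℝ`, the function
`G(x,y) = Σ_i min(f_i(x), f_i(y))` is totally monotone on ordered pairs:
for all `x1 ≤ x2 ≤ y1 ≤ y2`, `G(x1,y1) ≥ G(x1,y2)` implies `G(x2,y1) ≥ G(x2,y2)`. -/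
theorem sum_unimodal_min_totallyMonotone (k : ℕ) (f : Fin k → ℝ → ℝ)
    (hf : ∀ i, Unimodal (f i)) :
    ∀ x1 x2 y1 y2 : ℝ, x1 ≤ x2 → x2 ≤ y1 → y1 ≤ y2 →
      (∑ i, min (f i x1) (f i y2)) ≤ (∑ i, min (f i x1) (f i y1)) →
      (∑ i, min (f i x2) (f i y2)) ≤ (∑ i, min (f i x2) (f i y1)) := by
  intro x1 x2 y1 y2 h12 h21 hy hG
  have hsum : ∑ i, (min (f i x1) (f i y1) + min (f i x2) (f i y2)) ≤
      ∑ i, (min (f i x2) (f i y1) + min (f i x1) (f i y2)) :=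
    Finset.sum_le_sum fun i _ => unimodal_min_quad (f i) (hf i) h12 h21 hy
  rw [Finset.sum_add_distrib, Finset.sum_add_distrib] at hsum
  linarith
end

section
/- For the family (Y_0, Y_1, Y_2, Y_3), the split { Y_0, Y_2 } versus { Y_1, Y_3 } has value λ({Y_0, Y_2}) = (m + 1)(1 + 2ε). Consequently the MAE-split optimum satisfies λ* ≤ (m + 1)(1 + 2ε), so the median heuristic (whose best value is 2m + 2ε) can be worse than the optimum by a factor approaching 2 as m → ∞ and ε → 0. -/
lemma MAE_nonneg (m : Multiset ℝ) : 0 ≤ MAE m := by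
  apply Real.sInf_nonneg
  rintro v ⟨a, rfl⟩
  exact Multiset.sum_nonneg (by simp only [Multiset.mem_map]; rintro x ⟨y, _, rfl⟩; positivity)

lemma MAE_two (k l : ℕ) (hl : l ≤ k) (a b : ℝ) :
    MAE (Multiset.replicate k a + Multiset.replicate l b) = l * |b - a| := by
  have hf : ∀ x : ℝ, ((Multiset.replicate k a + Multiset.replicate l b).map
      (fun y => |y - x|)).sum = k * |a - x| + l * |b - x| := by
    intro x
    simp [Multiset.sum_replicate, nsmul_eq_mul]
  have hlb : (l : ℝ) * |b - a| ∈ lowerBounds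
      (Set.range fun x : ℝ => ((Multiset.replicate k a + Multiset.replicate l b).map
        (fun y => |y - x|)).sum) := by
    rintro v ⟨x, rfl⟩
    dsimp only
    rw [hf x]
    have h1 : |b - a| ≤ |b - x| + |x - a| := abs_sub_le b x a
    have h2 : |x - a| = |a - x| := abs_sub_comm x a
    have h3 : (l : ℝ) ≤ k := by exact_mod_cast hl
    have h4 : (0:ℝ) ≤ |a - x| := abs_nonneg _
    nlinarith
  unfold MAE
  apply le_antisymm
  · calc sInf _ ≤ ((Multiset.replicate k a + Multiset.replicate l b).map
        (fun y => |y - a|)).sum := csInf_le ⟨_, hlb⟩ ⟨a, rfl⟩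
    _ = l * |b - a| := by rw [hf a]; simp
  · exact le_csInf ⟨_, ⟨a, rfl⟩⟩ hlb

/-- For `m ≥ 1` and `0 < ε < 1/4`, with `Y_0 = 2m` copies of `0`, `Y_1 = 2m` copies of `1`,
`Y_2 = m` copies of `0` plus `m+1` copies of `1/2 + ε`, and `Y_3 = m` copies of `1` plus
`m+1` copies of `1/2 − ε` (indices `0,1,2,3` in `Fin 4`), the split `{Y_0, Y_2}` versus
`{Y_1, Y_3}` has cost `(m + 1)(1 + 2ε)`; consequently the MAE-split optimum satisfies
`λ* ≤ (m + 1)(1 + 2ε)` (so the median heuristic, whose best value is `2m + 2ε`, can be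
worse than the optimum by a factor approaching `2`). -/
theorem optimum_split_value (m : ℕ) (hm : 1 ≤ m) (ε : ℝ) (hε0 : 0 < ε) (hε : ε < 1/4) :
    splitCost
        ![Multiset.replicate (2*m) (0 : ℝ),
          Multiset.replicate (2*m) (1 : ℝ),
          Multiset.replicate m (0 : ℝ) + Multiset.replicate (m+1) (1/2 + ε),
          Multiset.replicate m (1 : ℝ) + Multiset.replicate (m+1) (1/2 - ε)]
        ({0, 2} : Finset (Fin 4)) = ((m : ℝ) + 1) * (1 + 2*ε) ∧
    lamStar
        ![Multiset.replicate (2*m) (0 : ℝ),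
          Multiset.replicate (2*m) (1 : ℝ),
          Multiset.replicate m (0 : ℝ) + Multiset.replicate (m+1) (1/2 + ε),
          Multiset.replicate m (1 : ℝ) + Multiset.replicate (m+1) (1/2 - ε)]
      ≤ ((m : ℝ) + 1) * (1 + 2*ε) := by
  set Y : Fin 4 → Multiset ℝ :=
    ![Multiset.replicate (2*m) (0 : ℝ),
      Multiset.replicate (2*m) (1 : ℝ),
      Multiset.replicate m (0 : ℝ) + Multiset.replicate (m+1) (1/2 + ε),
      Multiset.replicate m (1 : ℝ) + Multiset.replicate (m+1) (1/2 - ε)] with hY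
  have hcompl : (({0, 2} : Finset (Fin 4)))ᶜ = {1, 3} := by decide
  have hsum1 : ∑ i ∈ ({0, 2} : Finset (Fin 4)), Y i
      = Multiset.replicate (2*m + m) (0:ℝ) + Multiset.replicate (m+1) (1/2 + ε) := by
    rw [Finset.sum_pair (by decide : (0 : Fin 4) ≠ 2)]
    simp [hY, Multiset.replicate_add, add_assoc]
  have hsum2 : ∑ i ∈ (({0, 2} : Finset (Fin 4)))ᶜ, Y i
      = Multiset.replicate (2*m + m) (1:ℝ) + Multiset.replicate (m+1) (1/2 - ε) := by
    rw [hcompl, Finset.sum_pair (by decide : (1 : Fin 4) ≠ 3)]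
    simp [hY, Multiset.replicate_add, add_assoc]
  have habs1 : |1/2 + ε - (0:ℝ)| = 1/2 + ε := by rw [abs_of_pos] <;> linarith
  have habs2 : |1/2 - ε - (1:ℝ)| = 1/2 + ε := by rw [abs_of_neg] <;> linarith
  have hle : m + 1 ≤ 2*m + m := by omega
  have hcost : splitCost Y ({0, 2} : Finset (Fin 4)) = ((m : ℝ) + 1) * (1 + 2*ε) := by
    rw [splitCost, hsum1, hsum2, MAE_two _ _ hle, MAE_two _ _ hle, habs1, habs2]
    push_cast
    ring
  refine ⟨hcost, ?_⟩
  have hbdd : BddBelow {v : ℝ | ∃ S : Finset (Fin 4), S.Nonempty ∧ Sᶜ.Nonempty ∧ v = splitCost Y S} := by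
    refine ⟨0, ?_⟩
    rintro v ⟨S, -, -, rfl⟩
    exact add_nonneg (MAE_nonneg _) (MAE_nonneg _)
  have hmem : splitCost Y ({0, 2} : Finset (Fin 4)) ∈
      {v : ℝ | ∃ S : Finset (Fin 4), S.Nonempty ∧ Sᶜ.Nonempty ∧ v = splitCost Y S} :=
    ⟨{0, 2}, ⟨0, by decide⟩, ⟨1, by decide⟩, rfl⟩
  calc lamStar Y ≤ splitCost Y ({0, 2} : Finset (Fin 4)) := csInf_le hbdd hmem
  _ = ((m : ℝ) + 1) * (1 + 2*ε) := hcost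
end

section
/- Let f : ℝ → ℝ be unimodal and let a ≤ b be reals with f(a) > f(b). Then for every a' ≤ a and every b' with a' ≤ b' ≤ b, one has f(b') ≤ f(a'); in particular min(f(a'), f(b')) = f(b'). (This justifies replacing such a function by its contribution f(b') throughout the left subproblem in the divide-and-conquer recursion.) -/
/-- If `f` is unimodal, `a ≤ b` and `f(a) > f(b)`, then for every `a' ≤ a` and every `b'`
with `a' ≤ b' ≤ b` one has `f(b') ≤ f(a')`; in particular `min(f(a'), f(b')) = f(b')`.
(This justifies replacing such a function by its contribution `f(b')` throughout the left
subproblem in the divide-and-conquer recursion.) -/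
theorem left_subproblem_domination (f : ℝ → ℝ) (hf : Unimodal f)
    (a b : ℝ) (hab : a ≤ b) (hfab : f b < f a) :
    ∀ a' : ℝ, a' ≤ a → ∀ b' : ℝ, a' ≤ b' → b' ≤ b →
      f b' ≤ f a' ∧ min (f a') (f b') = f b' := by
  obtain ⟨c, hdec, hinc⟩ := hf
  intro a' ha' b' hab' hb'
  have hac : a ≤ c := by
    by_contra h
    exact absurd (hinc a b (le_of_not_ge h) hab) (not_le_of_gt hfab)
  have key : f b' ≤ f a' := by
    rcases le_or_gt b' c with h | h
    · exact hdec a' b' hab' h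
    · calc f b' ≤ f b := hinc b' b h.le hb'
        _ ≤ f a := hfab.le
        _ ≤ f a' := hdec a' a ha' hac
  exact ⟨key, min_eq_right key⟩
end

section
/- Let M : Fin n → Fin m → ℝ be a totally monotone matrix (n, m ≥ 1), and for each row i let r(i) be the largest column index j minimizing M i j over j. Then r is monotone: i1 ≤ i2 implies r(i1) ≤ r(i2). -/
/-- A real matrix `M`, indexed by `Fin n × Fin m`, is totally monotone if for all rows
`i1 ≤ i2` and columns `j1 ≤ j2`, `M i1 j1 ≥ M i1 j2` implies `M i2 j1 ≥ M i2 j2`. -/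
def TotallyMonotone {n m : ℕ} (M : Fin n → Fin m → ℝ) : Prop :=
  ∀ i1 i2 : Fin n, ∀ j1 j2 : Fin m, i1 ≤ i2 → j1 ≤ j2 →
    M i1 j2 ≤ M i1 j1 → M i2 j2 ≤ M i2 j1

/-- For a totally monotone matrix `M : Fin n → Fin m → ℝ` (with `n, m ≥ 1`), if `r i` is
the largest column index minimizing row `i` (i.e. the greatest element of the set of
minimizers of `M i ·`), then `r` is monotone: `i1 ≤ i2` implies `r i1 ≤ r i2`. -/
theorem row_minima_monotone {n m : ℕ} (hn : 1 ≤ n) (hm : 1 ≤ m)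
    (M : Fin n → Fin m → ℝ) (hM : TotallyMonotone M)
    (r : Fin n → Fin m)
    (hr : ∀ i : Fin n, IsGreatest {j : Fin m | ∀ j' : Fin m, M i j ≤ M i j'} (r i)) :
    Monotone r := by
  intro i1 i2 h12
  by_contra hlt
  push_neg at hlt
  have h21 : r i2 ≤ r i1 := le_of_lt hlt
  have h1 : M i1 (r i1) ≤ M i1 (r i2) := (hr i1).1 (r i2)
  have h2 : M i2 (r i1) ≤ M i2 (r i2) := hM i1 i2 (r i2) (r i1) h12 h21 h1
  have hmem : r i1 ∈ {j : Fin m | ∀ j' : Fin m, M i2 j ≤ M i2 j'} := by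
    intro j'
    exact h2.trans ((hr i2).1 j')
  exact absurd ((hr i2).2 hmem) (not_le.mpr hlt)
end

section
/- Let M : Fin n → Fin m → ℝ be a totally monotone matrix (n, m ≥ 1). Fix a row i and let j = r(i) be the largest column index minimizing M i · over columns. Then the global minimum of M is attained at some entry (i*, j*) with either (i* = i and j* = j), or (i* < i and j* ≤ j), or (i* > i and j* ≥ j). (This localization underlies the divide-and-conquer algorithm: after computing the minimum of the middle row, the search may be restricted to the upper-left and lower-right submatrices.) -/
/-- Let `M` be a totally monotone matrix, `i` a row, and `j` the largest column index
minimizing `M i ·`. Then the global minimum of `M` is attained at some entry `(i*, j*)`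
with either `i* = i ∧ j* = j`, or `i* < i ∧ j* ≤ j`, or `i* > i ∧ j* ≥ j`. (This
localization underlies the divide-and-conquer algorithm.) -/
theorem global_min_localization {n m : ℕ} (M : Fin n → Fin m → ℝ)
    (hM : TotallyMonotone M) (i : Fin n) (j : Fin m)
    (hj : IsGreatest {j' : Fin m | ∀ j'' : Fin m, M i j' ≤ M i j''} j) :
    ∃ istar : Fin n, ∃ jstar : Fin m,
      (∀ i' : Fin n, ∀ j' : Fin m, M istar jstar ≤ M i' j') ∧
      ((istar = i ∧ jstar = j) ∨ (istar < i ∧ jstar ≤ j) ∨ (i < istar ∧ j ≤ jstar)) := by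
  obtain ⟨hjmin, hjmax⟩ := hj
  have : Nonempty (Fin n × Fin m) := ⟨i, j⟩
  obtain ⟨⟨i0, j0⟩, hmin⟩ := Finite.exists_min (fun p : Fin n × Fin m => M p.1 p.2)
  have hglob : ∀ i' : Fin n, ∀ j' : Fin m, M i0 j0 ≤ M i' j' := fun i' j' => hmin (i', j')
  rcases lt_trichotomy i0 i with hlt | heq | hgt
  · -- i0 < i : show j0 ≤ j
    refine ⟨i0, j0, hglob, Or.inr (Or.inl ⟨hlt, ?_⟩)⟩
    by_contra h
    push_neg at h
    -- j < j0; total monotonicity: M i0 j0 ≤ M i0 j gives M i j0 ≤ M i j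
    have h1 : M i j0 ≤ M i j := hM i0 i j j0 hlt.le h.le (hglob i0 j)
    have h2 : j0 ∈ {j' : Fin m | ∀ j'' : Fin m, M i j' ≤ M i j''} :=
      fun j'' => h1.trans (hjmin j'')
    exact absurd (hjmax h2) (not_le.mpr h)
  · -- i0 = i : (i, j) is also a global min
    subst heq
    refine ⟨i0, j, fun i' j' => (hjmin j0).trans (hglob i' j'), Or.inl ⟨rfl, rfl⟩⟩
  · -- i < i0
    rcases le_or_gt j j0 with hle | hlt'
    · exact ⟨i0, j0, hglob, Or.inr (Or.inr ⟨hgt, hle⟩)⟩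
    · -- j0 < j : M i j ≤ M i j0 so M i0 j ≤ M i0 j0 ≤ min
      have h1 : M i0 j ≤ M i0 j0 := hM i i0 j0 j hgt.le hlt'.le (hjmin j0)
      exact ⟨i0, j, fun i' j' => h1.trans (hglob i' j'), Or.inr (Or.inr ⟨hgt, le_refl j⟩)⟩
end

section
/- Let ι be a nonempty finite index type and Y : ι → Multiset ℝ a family of nonempty finite multisets of reals, and define g(a,b) = Σ_{i ∈ ι} min( Σ_{x ∈ Y i} |x − a| , Σ_{x ∈ Y i} |x − b| ) for a, b ∈ ℝ. Then the infimum of g over ℝ × ℝ is attained at a pair of data points: there exist a*, b* both belonging to the combined multiset Σ_{i ∈ ι} Y i such that g(a*, b*) ≤ g(a, b) for all a, b ∈ ℝ. -/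
noncomputable def fdev (m : Multiset ℝ) (c : ℝ) : ℝ := (m.map fun x => |x - c|).sum

lemma fdev_cons (a : ℝ) (m : Multiset ℝ) (c : ℝ) :
    fdev (a ::ₘ m) c = |a - c| + fdev m c := by
  simp [fdev]

lemma fdev_nonneg (m : Multiset ℝ) (c : ℝ) : 0 ≤ fdev m c := by
  refine Multiset.sum_nonneg ?_
  intro x hx
  obtain ⟨y, _, rfl⟩ := Multiset.mem_map.1 hx
  positivity

lemma median_aux : ∀ (n : ℕ) (m : Multiset ℝ), Multiset.card m = n → m ≠ 0 →
    ∃ e ∈ m, ∀ c, fdev m e ≤ fdev m c := by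
  intro n
  induction n using Nat.strong_induction_on with
  | _ n ih =>
    intro m hcard hm
    have hne : m.toFinset.Nonempty := by
      rw [Multiset.toFinset_nonempty]; exact hm
    set a := m.toFinset.min' hne with ha
    set b := m.toFinset.max' hne with hb
    have ham : a ∈ m := Multiset.mem_toFinset.1 (m.toFinset.min'_mem hne)
    have hbm : b ∈ m := Multiset.mem_toFinset.1 (m.toFinset.max'_mem hne)
    have hmin : ∀ y ∈ m, a ≤ y := fun y hy => m.toFinset.min'_le y (Multiset.mem_toFinset.2 hy)
    have hmax : ∀ y ∈ m, y ≤ b := fun y hy => m.toFinset.le_max' y (Multiset.mem_toFinset.2 hy)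
    rcases Nat.lt_or_ge n 2 with h2 | h2
    · -- card = 1
      have h1 : Multiset.card m = 1 := by
        interval_cases n
        · simp at hcard; exact absurd hcard hm
        · exact hcard
      obtain ⟨x, rfl⟩ := Multiset.card_eq_one.1 h1
      refine ⟨x, by simp, fun c => ?_⟩
      simp only [fdev, Multiset.map_singleton, Multiset.sum_singleton, sub_self, abs_zero]
      positivity
    · -- card ≥ 2
      have hbe : b ∈ m.erase a := by
        rcases eq_or_ne b a with heq | hne'
        · have hall : Multiset.count a m = Multiset.card m := by
            rw [Multiset.count_eq_card]
            intro y hy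
            exact le_antisymm (hmin y hy) (heq ▸ hmax y hy)
          rw [heq]
          refine Multiset.count_pos.1 ?_
          rw [Multiset.count_erase_self, hall, hcard]
          omega
        · exact Multiset.mem_erase_of_ne hne' |>.2 hbm
      set m' := (m.erase a).erase b with hm'
      have hmeq : m = a ::ₘ b ::ₘ m' := by
        rw [hm', Multiset.cons_erase hbe, Multiset.cons_erase ham]
      have hcard' : Multiset.card m' + 2 = n := by
        have := hcard
        rw [hmeq] at this
        simpa using this
      have key : ∀ c : ℝ, b - a ≤ |a - c| + |b - c| := by
        intro c
        have : |b - a| ≤ |b - c| + |c - a| := abs_sub_le b c a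
        have hab : a ≤ b := hmin b hbm
        rw [abs_of_nonneg (by linarith)] at this
        calc b - a ≤ |b - c| + |c - a| := this
          _ = |a - c| + |b - c| := by rw [abs_sub_comm c a]; ring
      rcases eq_or_ne m' 0 with hz | hm'ne
      · refine ⟨a, ham, fun c => ?_⟩
        rw [hmeq, hz]
        simp only [fdev_cons]
        have hab : a ≤ b := hmin b hbm
        have : fdev 0 a = 0 := by simp [fdev]
        have h0 : fdev (0 : Multiset ℝ) c = 0 := by simp [fdev]
        rw [this, h0, sub_self, abs_zero]
        have h2' : |b - a| = b - a := abs_of_nonneg (by linarith)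
        rw [h2']
        have := key c
        linarith
      · obtain ⟨e, hem', he⟩ := ih (Multiset.card m') (by omega) m' rfl hm'ne
        have hem : e ∈ m := by
          rw [hmeq]; simp [Multiset.mem_cons]
          right; right; exact hem'
        refine ⟨e, hem, fun c => ?_⟩
        have hae : a ≤ e := hmin e hem
        have heb : e ≤ b := hmax e hem
        rw [hmeq]
        simp only [fdev_cons]
        have h1 : |a - e| + |b - e| = b - a := by
          rw [abs_sub_comm a e, abs_of_nonneg (by linarith), abs_of_nonneg (by linarith)]
          ring
        have := key c
        have := he c
        linarith

lemma fdev_add (m n : Multiset ℝ) (c : ℝ) : fdev (m + n) c = fdev m c + fdev n c := by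
  simp [fdev]

lemma fdev_sum {ι : Type*} (Y : ι → Multiset ℝ) (I : Finset ι) (c : ℝ) :
    fdev (∑ i ∈ I, Y i) c = ∑ i ∈ I, fdev (Y i) c := by
  classical
  induction I using Finset.cons_induction with
  | empty => simp [fdev]
  | cons i I hi ih => rw [Finset.sum_cons, Finset.sum_cons, fdev_add, ih]

/-- Let `ι` be a nonempty finite index type and `Y : ι → Multiset ℝ` a family of nonempty
finite multisets of reals, and let
`g(a,b) = Σ_i min(Σ_{x ∈ Y i} |x − a|, Σ_{x ∈ Y i} |x − b|)`. Then the infimum of `g` over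
`ℝ × ℝ` is attained at a pair of data points: there are `a*, b*` in the combined multiset
`Σ_i Y i` with `g(a*, b*) ≤ g(a, b)` for all `a, b : ℝ`. -/
theorem two_median_attained_at_data_points
    {ι : Type*} [Fintype ι] [Nonempty ι] (Y : ι → Multiset ℝ) (hY : ∀ i, Y i ≠ 0) :
    ∃ astar bstar : ℝ, astar ∈ (∑ i, Y i) ∧ bstar ∈ (∑ i, Y i) ∧
      ∀ a b : ℝ,
        (∑ i, min ((Y i).map fun x => |x - astar|).sum ((Y i).map fun x => |x - bstar|).sum)
          ≤ ∑ i, min ((Y i).map fun x => |x - a|).sum ((Y i).map fun x => |x - b|).sum := by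
  classical
  set M := ∑ i, Y i with hM
  set g : ℝ → ℝ → ℝ := fun a b => ∑ i, min (fdev (Y i) a) (fdev (Y i) b) with hg
  have hMex : ∃ x, x ∈ M := by
    obtain ⟨i0⟩ := ‹Nonempty ι›
    obtain ⟨x, hx⟩ := Multiset.exists_mem_of_ne_zero (hY i0)
    exact ⟨x, Multiset.mem_sum.2 ⟨i0, Finset.mem_univ _, hx⟩⟩
  have hsub : ∀ I : Finset ι, (∑ i ∈ I, Y i) ≤ M :=
    fun I => Finset.sum_le_sum_of_subset (Finset.subset_univ I)
  have exmin : ∀ I : Finset ι, ∃ e ∈ M, ∀ c,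
      ∑ i ∈ I, fdev (Y i) e ≤ ∑ i ∈ I, fdev (Y i) c := by
    intro I
    rcases eq_or_ne I ∅ with rfl | hI
    · obtain ⟨x, hx⟩ := hMex
      exact ⟨x, hx, by simp⟩
    · have hne0 : (∑ i ∈ I, Y i) ≠ 0 := by
        obtain ⟨i, hi⟩ := Finset.nonempty_of_ne_empty hI
        intro h
        obtain ⟨x, hx⟩ := Multiset.exists_mem_of_ne_zero (hY i)
        have : x ∈ (∑ i ∈ I, Y i) := Multiset.mem_sum.2 ⟨i, hi, hx⟩
        rw [h] at this
        exact absurd this (Multiset.notMem_zero x)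
      obtain ⟨e, he, hmine⟩ := median_aux (Multiset.card (∑ i ∈ I, Y i)) _ rfl hne0
      refine ⟨e, Multiset.mem_of_le (hsub I) he, fun c => ?_⟩
      rw [← fdev_sum, ← fdev_sum]
      exact hmine c
  have claim : ∀ a b : ℝ, ∃ a' ∈ M, ∃ b' ∈ M, g a' b' ≤ g a b := by
    intro a b
    set I := Finset.univ.filter (fun i => fdev (Y i) a ≤ fdev (Y i) b) with hI
    obtain ⟨a', ha', hA⟩ := exmin I
    obtain ⟨b', hb', hB⟩ := exmin Iᶜ
    refine ⟨a', ha', b', hb', ?_⟩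
    have h1 : (∑ i, min (fdev (Y i) a') (fdev (Y i) b'))
        ≤ ∑ i ∈ I, fdev (Y i) a' + ∑ i ∈ Iᶜ, fdev (Y i) b' := by
      rw [← Finset.sum_add_sum_compl I (fun i => min (fdev (Y i) a') (fdev (Y i) b'))]
      gcongr with i hi i hi
      · exact min_le_left _ _
      · exact min_le_right _ _
    have h2 : ∑ i ∈ I, fdev (Y i) a + ∑ i ∈ Iᶜ, fdev (Y i) b
        = ∑ i, min (fdev (Y i) a) (fdev (Y i) b) := by
      rw [← Finset.sum_add_sum_compl I (fun i => min (fdev (Y i) a) (fdev (Y i) b))]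
      congr 1
      · refine Finset.sum_congr rfl fun i hi => ?_
        rw [hI] at hi
        exact (min_eq_left (Finset.mem_filter.1 hi).2).symm
      · refine Finset.sum_congr rfl fun i hi => ?_
        have hni : i ∉ I := Finset.mem_compl.1 hi
        have : ¬ fdev (Y i) a ≤ fdev (Y i) b := by
          intro h
          exact hni (by rw [hI]; exact Finset.mem_filter.2 ⟨Finset.mem_univ i, h⟩)
        exact (min_eq_right (le_of_not_ge this)).symm
    calc g a' b' ≤ ∑ i ∈ I, fdev (Y i) a' + ∑ i ∈ Iᶜ, fdev (Y i) b' := h1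
      _ ≤ ∑ i ∈ I, fdev (Y i) a + ∑ i ∈ Iᶜ, fdev (Y i) b := add_le_add (hA a) (hB b)
      _ = g a b := h2
  have hSne : (M.toFinset ×ˢ M.toFinset).Nonempty := by
    obtain ⟨x, hx⟩ := hMex
    exact ⟨(x, x), Finset.mem_product.2 ⟨Multiset.mem_toFinset.2 hx, Multiset.mem_toFinset.2 hx⟩⟩
  obtain ⟨p, hp, hpmin⟩ := Finset.exists_min_image (M.toFinset ×ˢ M.toFinset)
    (fun p => g p.1 p.2) hSne
  obtain ⟨hp1, hp2⟩ := Finset.mem_product.1 hp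
  refine ⟨p.1, p.2, Multiset.mem_toFinset.1 hp1, Multiset.mem_toFinset.1 hp2, fun a b => ?_⟩
  obtain ⟨a', ha', b', hb', hab⟩ := claim a b
  have hmem : (a', b') ∈ M.toFinset ×ˢ M.toFinset :=
    Finset.mem_product.2 ⟨Multiset.mem_toFinset.2 ha', Multiset.mem_toFinset.2 hb'⟩
  have := le_trans (hpmin (a', b') hmem) hab
  exact this
end
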